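/- Let p be a probability distribution on {0,1,2,3}^n with η := 1 − p(0^n), and fix B ∈ {0,1,2,3}^n with B ≠ 0^n. Let A be uniform on {1,2,3}^n and, independently, C ~ p, and define H' = (−1/2)^{|(A⋆B) +₂ (A⋆C)|} − (−1/2)^{|A⋆B|}. Then: (i) E[H'] = p(B); (ii) H' = 0 whenever C = 0^n and |H'| ≤ 2 always; and (iii) E[(H')²] ≤ 4η. -/
import Mathlib


open scoped BigOperators

noncomputable section

/-- Identify `a ∈ {0,1,2,3}` with its base-2 representation `(a₁, a₂) ∈ 𝔽₂²`. -/
def bits (a : Fin 4) : ZMod 2 × ZMod 2 :=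
  (((a.val / 2 : ℕ) : ZMod 2), ((a.val % 2 : ℕ) : ZMod 2))

/-- Symplectic product `a ⋆ b = a₁b₂ + a₂b₁ (mod 2)`. -/
def sstar (a b : Fin 4) : ZMod 2 :=
  (bits a).1 * (bits b).2 + (bits a).2 * (bits b).1

/-- Coordinatewise symplectic product `A ⋆ C ∈ {0,1}ⁿ`. -/
def starN {n : ℕ} (A C : Fin n → Fin 4) : Fin n → ZMod 2 :=
  fun j => sstar (A j) (C j)

/-- Hamming weight of `x ∈ {0,1}ⁿ`. -/
def wt {n : ℕ} (x : Fin n → ZMod 2) : ℕ := ∑ j, (x j).val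

/-- Coordinatewise addition mod 2 on `{0,1}ⁿ`. -/
def add2 {n : ℕ} (x y : Fin n → ZMod 2) : Fin n → ZMod 2 := fun j => x j + y j

/-- View a string in `{1,2,3}ⁿ` as a string in `{0,1,2,3}ⁿ`. -/
def lift3 {n : ℕ} (A : Fin n → Fin 3) : Fin n → Fin 4 := fun j => (A j).succ

/-- The centered estimator
`H' = (−1/2)^{|(A⋆B) +₂ (A⋆C)|} − (−1/2)^{|A⋆B|}`. -/
def Hprime {n : ℕ} (B : Fin n → Fin 4) (A : Fin n → Fin 3)
    (C : Fin n → Fin 4) : ℝ :=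
  (-1 / 2 : ℝ) ^ wt (add2 (starN (lift3 A) B) (starN (lift3 A) C)) -
    (-1 / 2 : ℝ) ^ wt (starN (lift3 A) B)

def xor4 (a b : Fin 4) : Fin 4 :=
  ⟨a.val ^^^ b.val, by
    have : a.val ^^^ b.val < 2 ^ 2 :=
      Nat.xor_lt_two_pow (by omega) (by omega)
    simpa using this⟩

lemma sstar_xor : ∀ a b c : Fin 4, sstar a b + sstar a c = sstar a (xor4 b c) := by decide
lemma xor4_eq_zero : ∀ b c : Fin 4, (xor4 b c = 0 ↔ c = b) := by decide
lemma sstar_zero : ∀ a : Fin 4, sstar a 0 = 0 := by decide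

lemma pow_sstar (a b : Fin 4) :
    (-1/2 : ℝ) ^ (sstar a b).val = if sstar a b = 0 then 1 else -1/2 := by
  have h2 : ∀ x : ZMod 2, x = 0 ∨ x = 1 := by decide
  have v1 : (1 : ZMod 2).val = 1 := rfl
  rcases h2 (sstar a b) with h | h <;> simp [h, v1]

lemma coord_sum (d : Fin 4) :
    ∑ a : Fin 3, (-1/2 : ℝ) ^ (sstar (a.succ) d).val =
      if d = 0 then (3 : ℝ) else 0 := by
  fin_cases d <;> simp +decide [Fin.sum_univ_three, pow_sstar] <;> norm_num

lemma sumA {n : ℕ} (D : Fin n → Fin 4) :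
    ∑ A : Fin n → Fin 3, (-1/2 : ℝ) ^ wt (starN (lift3 A) D) =
      if D = (fun _ => 0) then (3 : ℝ) ^ n else 0 := by
  have h1 : ∀ A : Fin n → Fin 3,
      (-1/2 : ℝ) ^ wt (starN (lift3 A) D)
        = ∏ j, (-1/2 : ℝ) ^ (sstar ((A j).succ) (D j)).val := by
    intro A
    rw [wt, ← Finset.prod_pow_eq_pow_sum]
    rfl
  simp only [h1]
  rw [← Fintype.prod_sum (fun (j : Fin n) (a : Fin 3) => (-1/2:ℝ) ^ (sstar a.succ (D j)).val)]
  simp only [coord_sum]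
  by_cases hD : D = fun _ => 0
  · subst hD; simp
  · rw [if_neg hD]
    obtain ⟨j, hj⟩ : ∃ j, D j ≠ 0 := by
      by_contra h; push_neg at h; exact hD (funext h)
    exact Finset.prod_eq_zero (Finset.mem_univ j) (by simp [hj])

lemma abs_pow_le_one (k : ℕ) : |(-1/2 : ℝ) ^ k| ≤ 1 := by
  rw [abs_pow]
  apply pow_le_one₀ (abs_nonneg _)
  rw [abs_div]
  norm_num

lemma Hprime_zero {n : ℕ} (B : Fin n → Fin 4) (A : Fin n → Fin 3) :
    Hprime B A (fun _ => 0) = 0 := by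
  have : add2 (starN (lift3 A) B) (starN (lift3 A) (fun _ => 0))
      = starN (lift3 A) B := by
    funext j; simp [add2, starN, sstar_zero]
  simp [Hprime, this]

lemma Hprime_abs_le {n : ℕ} (B : Fin n → Fin 4) (A : Fin n → Fin 3)
    (C : Fin n → Fin 4) : |Hprime B A C| ≤ 2 := by
  have h := abs_sub (((-1/2 : ℝ)) ^ wt (add2 (starN (lift3 A) B) (starN (lift3 A) C)))
    (((-1/2 : ℝ)) ^ wt (starN (lift3 A) B))
  calc |Hprime B A C| ≤ _ + _ := abs_sub _ _
    _ ≤ 1 + 1 := add_le_add (abs_pow_le_one _) (abs_pow_le_one _)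
    _ = 2 := by norm_num

lemma sum_Hprime {n : ℕ} (B : Fin n → Fin 4) (hB : B ≠ fun _ => 0)
    (C : Fin n → Fin 4) :
    ∑ A : Fin n → Fin 3, Hprime B A C = if C = B then (3:ℝ)^n else 0 := by
  have hw : ∀ A : Fin n → Fin 3,
      wt (add2 (starN (lift3 A) B) (starN (lift3 A) C))
        = wt (starN (lift3 A) (fun j => xor4 (B j) (C j))) := by
    intro A
    congr 1
    funext j
    exact sstar_xor _ _ _
  simp only [Hprime, hw, Finset.sum_sub_distrib, sumA]
  rw [if_neg hB]
  have : ((fun j => xor4 (B j) (C j)) = fun _ => 0) ↔ C = B := by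
    constructor
    · intro h
      funext j
      exact (xor4_eq_zero _ _).1 (congrFun h j)
    · intro h; subst h; funext j; exact (xor4_eq_zero _ _).2 rfl
  rw [sub_zero, if_congr this rfl rfl]

/-- for `B ≠ 0ⁿ`, the centered estimator `H'` satisfies:
(i) `E[H'] = p(B)`; (ii) `H' = 0` whenever `C = 0ⁿ`, and `|H'| ≤ 2`
always; (iii) `E[(H')²] ≤ 4η`, where `η = 1 − p(0ⁿ)`. -/
theorem centered_estimator_properties {n : ℕ} (p : (Fin n → Fin 4) → ℝ)
    (hp0 : ∀ C, 0 ≤ p C) (hp1 : ∑ C, p C = 1)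
    (B : Fin n → Fin 4) (hB : B ≠ fun _ => 0) :
    (∑ A : Fin n → Fin 3, ∑ C : Fin n → Fin 4,
        ((3 : ℝ) ^ n)⁻¹ * p C * Hprime B A C) = p B ∧
    ((∀ A : Fin n → Fin 3, Hprime B A (fun _ => 0) = 0) ∧
      ∀ (A : Fin n → Fin 3) (C : Fin n → Fin 4), |Hprime B A C| ≤ 2) ∧
    (∑ A : Fin n → Fin 3, ∑ C : Fin n → Fin 4,
        ((3 : ℝ) ^ n)⁻¹ * p C * (Hprime B A C) ^ 2) ≤
      4 * (1 - p (fun _ => 0)) := by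
  have h3n : ((3:ℝ)^n) ≠ 0 := by positivity
  refine ⟨?_, ⟨Hprime_zero B, Hprime_abs_le B⟩, ?_⟩
  · rw [Finset.sum_comm]
    have : ∀ C : Fin n → Fin 4,
        ∑ A : Fin n → Fin 3, ((3:ℝ)^n)⁻¹ * p C * Hprime B A C
          = ((3:ℝ)^n)⁻¹ * p C * (if C = B then (3:ℝ)^n else 0) := by
      intro C
      rw [← Finset.mul_sum, sum_Hprime B hB]
    simp only [this, mul_ite, mul_zero]
    rw [Finset.sum_ite_eq' Finset.univ B
      (fun C => ((3:ℝ)^n)⁻¹ * p C * (3:ℝ)^n)]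
    simp only [Finset.mem_univ, if_true]
    field_simp
  · have step1 : ∀ (A : Fin n → Fin 3) (C : Fin n → Fin 4),
        ((3:ℝ)^n)⁻¹ * p C * (Hprime B A C) ^ 2
          ≤ ((3:ℝ)^n)⁻¹ * (if C = (fun _ => 0) then 0 else 4 * p C) := by
      intro A C
      by_cases hC : C = (fun _ => 0)
      · subst hC
        simp [Hprime_zero]
      · rw [if_neg hC]
        have h1 : (Hprime B A C)^2 ≤ 4 := by
          have := Hprime_abs_le B A C
          nlinarith [abs_nonneg (Hprime B A C), sq_abs (Hprime B A C)]
        have h2 : p C * (Hprime B A C)^2 ≤ 4 * p C := by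
          nlinarith [hp0 C]
        have h3 : (0:ℝ) ≤ ((3:ℝ)^n)⁻¹ := by positivity
        calc ((3:ℝ)^n)⁻¹ * p C * (Hprime B A C)^2
            = ((3:ℝ)^n)⁻¹ * (p C * (Hprime B A C)^2) := by ring
          _ ≤ ((3:ℝ)^n)⁻¹ * (4 * p C) := by
              exact mul_le_mul_of_nonneg_left h2 h3
    have step2 : ∑ C : Fin n → Fin 4, (if C = (fun _ => 0) then 0 else 4 * p C)
        = 4 * (1 - p (fun _ => 0)) := by
      have : ∀ C : Fin n → Fin 4, (if C = (fun _ => 0) then (0:ℝ) else 4 * p C)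
          = 4 * p C - (if C = (fun _ => 0) then 4 * p C else 0) := by
        intro C; split_ifs <;> ring
      simp only [this]
      rw [Finset.sum_sub_distrib, ← Finset.mul_sum, hp1,
        Finset.sum_ite_eq' Finset.univ (fun _ => 0) (fun C => 4 * p C)]
      simp
      ring
    calc ∑ A : Fin n → Fin 3, ∑ C : Fin n → Fin 4,
          ((3:ℝ)^n)⁻¹ * p C * (Hprime B A C)^2
        ≤ ∑ A : Fin n → Fin 3, ∑ C : Fin n → Fin 4,
          ((3:ℝ)^n)⁻¹ * (if C = (fun _ => 0) then 0 else 4 * p C) := by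
          apply Finset.sum_le_sum
          intro A _
          exact Finset.sum_le_sum (fun C _ => step1 A C)
      _ = ∑ A : Fin n → Fin 3, ((3:ℝ)^n)⁻¹ * (4 * (1 - p (fun _ => 0))) := by
          simp only [← Finset.mul_sum, step2]
      _ = 4 * (1 - p (fun _ => 0)) := by
          rw [Finset.sum_const, Finset.card_univ]
          simp only [Fintype.card_fun, Fintype.card_fin, nsmul_eq_mul,
            Nat.cast_pow, Nat.cast_ofNat]
          field_simp
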